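/- arXiv:1805.01280 — 3 statements merged into one kernel-verified Lean document; each statement's English description precedes it below -/
import Mathlib

section
/- Let G be a connected bipartite graph with bipartition V_1, V_2 of minimum degrees δ_1, δ_2 respectively, let k ≥ 1, and let v ∈ V_1 with N_k[v] ≠ V(G). Then the number of vertices of V_1 at distance at most k from v (excluding v) is at least ⌈(k-1)/4⌉·max{2, δ_2} + 2·⌊k/4⌋ - ⌊k/2⌋. -/
open SimpleGraph Finset

lemma aux_level {V : Type*} (G : SimpleGraph V) (hconn : G.Connected) (v : V) :
    ∀ n u, G.dist v u = n → ∀ d, d ≤ n → ∃ w, G.dist v w = d := by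
  intro n
  induction n with
  | zero =>
    intro u _ d hd
    exact ⟨v, by simp [Nat.le_zero.mp hd]⟩
  | succ n ih =>
    intro u hu d hd
    rcases Nat.eq_or_lt_of_le hd with h | h
    · exact ⟨u, by omega⟩
    · have hne : v ≠ u := by
        intro h'; subst h'; simp [SimpleGraph.dist_self] at hu
      have hdist0 : G.dist u v ≠ 0 := by
        rw [SimpleGraph.dist_comm]; omega
      obtain ⟨p, hp⟩ := SimpleGraph.exists_walk_of_dist_ne_zero hdist0
      obtain ⟨x, hadj, q, rfl⟩ := SimpleGraph.Walk.exists_eq_cons_of_ne (Ne.symm hne) p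
      have hql : q.length = n := by
        rw [SimpleGraph.Walk.length_cons, SimpleGraph.dist_comm] at hp
        omega
      have h1 : G.dist v x ≤ n := by
        have h := SimpleGraph.dist_le q.reverse
        rwa [SimpleGraph.Walk.length_reverse, hql] at h
      have h2 : n ≤ G.dist v x := by
        have ht := hconn.dist_triangle (u := v) (v := x) (w := u)
        have h1' : G.dist x u = 1 := SimpleGraph.dist_eq_one_iff_adj.mpr hadj.symm
        omega
      exact ih x (by omega) d (by omega)

lemma aux_parity {V : Type*} (G : SimpleGraph V) (V1 V2 : Finset V)
    (hpart : ∀ w, (w ∈ V1 ∨ w ∈ V2) ∧ ¬(w ∈ V1 ∧ w ∈ V2))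
    (hbip : ∀ a b, G.Adj a b → (a ∈ V1 ↔ b ∈ V2)) :
    ∀ {a b : V} (p : G.Walk a b), ((a ∈ V1 ↔ b ∈ V1) ↔ Even p.length) := by
  intro a b p
  induction p with
  | nil => simp
  | cons hadj q ih =>
    rename_i u x w
    have h1 := hbip _ _ hadj
    have h2 := hpart u
    have h3 := hpart x
    rw [SimpleGraph.Walk.length_cons, Nat.even_add_one, ← ih]
    tauto

theorem stmt_8 {V : Type*} [Fintype V] [DecidableEq V]
    (G : SimpleGraph V) [DecidableRel G.Adj]
    (V1 V2 : Finset V)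
    (hpart : ∀ w, (w ∈ V1 ∨ w ∈ V2) ∧ ¬(w ∈ V1 ∧ w ∈ V2))
    (hbip : ∀ a b, G.Adj a b → (a ∈ V1 ↔ b ∈ V2))
    (hconn : G.Connected) (k : ℕ) (hk : 1 ≤ k)
    (δ1 δ2 : ℕ)
    (hδ1min : (∀ w ∈ V1, δ1 ≤ G.degree w) ∧ ∃ w ∈ V1, G.degree w = δ1)
    (hδ2min : (∀ w ∈ V2, δ2 ≤ G.degree w) ∧ ∃ w ∈ V2, G.degree w = δ2)
    (v : V) (hv : v ∈ V1) (hnk : ∃ u, k < G.dist v u) :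
    ⌈((k : ℚ) - 1) / 4⌉ * (max 2 (δ2 : ℤ)) + 2 * ⌊(k : ℚ) / 4⌋ - ⌊(k : ℚ) / 2⌋ ≤
      ((univ.filter (fun w => w ∈ V1 ∧ w ≠ v ∧ G.dist v w ≤ k)).card : ℤ) := by
  obtain ⟨u0, hu0⟩ := hnk
  have hlevel : ∀ d, d ≤ k → ∃ w, G.dist v w = d := fun d hd =>
    aux_level G hconn v (G.dist v u0) u0 rfl d (by omega)
  have hpar : ∀ w : V, (w ∈ V1 ↔ Even (G.dist v w)) := by
    intro w
    obtain ⟨p, hp⟩ := (hconn v w).exists_walk_length_eq_dist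
    have h := aux_parity G V1 V2 hpart hbip p
    rw [hp] at h
    tauto
  set m := max 2 δ2 with hm
  set q := (k+2)/4 with hq
  set A := univ.filter (fun w => w ∈ V1 ∧ w ≠ v ∧ G.dist v w ≤ k) with hA
  set T : ℕ → Finset V := fun j => univ.filter (fun w => G.dist v w = 4*j ∨ G.dist v w = 4*j+2) with hT
  -- each group has at least m vertices
  have hTcard : ∀ j, 4*j+2 ≤ k → m ≤ (T j).card := by
    intro j hj
    obtain ⟨w0, hw0⟩ := hlevel (4*j) (by omega)
    obtain ⟨w2, hw2⟩ := hlevel (4*j+2) (by omega)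
    obtain ⟨u1, hu1⟩ := hlevel (4*j+1) (by omega)
    have hu1V2 : u1 ∈ V2 := by
      have h1 := hpar u1
      have h2 := hpart u1
      rw [hu1, Nat.even_iff] at h1
      have : ¬ ((4*j+1) % 2 = 0) := by omega
      tauto
    have hsub : G.neighborFinset u1 ⊆ T j := by
      intro x hx
      rw [SimpleGraph.mem_neighborFinset] at hx
      have hxV1 : x ∈ V1 := (hbip x u1 hx.symm).mpr hu1V2
      have hxeven := (hpar x).mp hxV1
      rw [Nat.even_iff] at hxeven
      have hle : G.dist v x ≤ 4*j+2 := by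
        have ht := hconn.dist_triangle (u := v) (v := u1) (w := x)
        have h1 : G.dist u1 x = 1 := SimpleGraph.dist_eq_one_iff_adj.mpr hx
        omega
      have hge : 4*j ≤ G.dist v x := by
        have ht := hconn.dist_triangle (u := v) (v := x) (w := u1)
        have h1 : G.dist x u1 = 1 := SimpleGraph.dist_eq_one_iff_adj.mpr hx.symm
        omega
      simp only [hT, mem_filter, mem_univ, true_and]
      omega
    have hd2 : δ2 ≤ (T j).card := by
      have := hδ2min.1 u1 hu1V2
      rw [← SimpleGraph.card_neighborFinset_eq_degree] at this
      exact le_trans this (Finset.card_le_card hsub)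
    have h2 : 2 ≤ (T j).card := by
      rw [Nat.succ_le_iff]
      apply Finset.one_lt_card.mpr
      refine ⟨w0, ?_, w2, ?_, ?_⟩
      · simp only [hT, mem_filter, mem_univ, true_and]; omega
      · simp only [hT, mem_filter, mem_univ, true_and]; omega
      · intro h; rw [h] at hw0; omega
    exact max_le h2 hd2
  have hdisj : ∀ i ∈ Finset.range q, ∀ j ∈ Finset.range q, i ≠ j → Disjoint (T i) (T j) := by
    intro i _ j _ hij
    rw [Finset.disjoint_left]
    intro x hxi hxj
    simp only [hT, mem_filter, mem_univ, true_and] at hxi hxj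
    omega
  have hBcard : q * m ≤ ((Finset.range q).biUnion T).card := by
    rw [Finset.card_biUnion hdisj]
    calc q * m = (Finset.range q).card • m := by rw [Finset.card_range, smul_eq_mul]
    _ ≤ ∑ j ∈ Finset.range q, (T j).card := by
        apply Finset.card_nsmul_le_sum
        intro j hj
        rw [Finset.mem_range] at hj
        exact hTcard j (by omega)
  have hBsub : ((Finset.range q).biUnion T) \ {v} ⊆ A := by
    intro w hw
    rw [Finset.mem_sdiff, Finset.mem_biUnion] at hw
    obtain ⟨⟨j, hj, hwT⟩, hwv⟩ := hw
    rw [Finset.mem_range] at hj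
    simp only [hT, mem_filter, mem_univ, true_and] at hwT
    rw [Finset.mem_singleton] at hwv
    simp only [hA, mem_filter, mem_univ, true_and]
    refine ⟨(hpar w).mpr ?_, hwv, by omega⟩
    rw [Nat.even_iff]; omega
  -- the key counting fact
  have key : ∀ e : ℕ, (e = 1 → 4 ≤ k ∧ k % 4 ≤ 1) → e ≤ 1 → q * m + e ≤ A.card + 1 := by
    intro e he he1
    interval_cases e
    · have h1 := Finset.le_card_sdiff {v} ((Finset.range q).biUnion T)
      have h2 := Finset.card_le_card hBsub
      rw [Finset.card_singleton] at h1
      omega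
    · obtain ⟨hk4, hkm⟩ := he rfl
      obtain ⟨we, hwe⟩ := hlevel (4*(k/4)) (by omega)
      have hwenotin : we ∉ (Finset.range q).biUnion T := by
        rw [Finset.mem_biUnion]
        rintro ⟨j, hj, hwT⟩
        rw [Finset.mem_range] at hj
        simp only [hT, mem_filter, mem_univ, true_and] at hwT
        omega
      have hcard' : q * m + 1 ≤ (insert we ((Finset.range q).biUnion T)).card := by
        rw [Finset.card_insert_of_notMem hwenotin]
        omega
      have hsub' : (insert we ((Finset.range q).biUnion T)) \ {v} ⊆ A := by
        intro w hw
        rw [Finset.mem_sdiff, Finset.mem_insert] at hw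
        obtain ⟨hw1 | hw2, hwv⟩ := hw
        · subst hw1
          rw [Finset.mem_singleton] at hwv
          simp only [hA, mem_filter, mem_univ, true_and]
          refine ⟨(hpar w).mpr ?_, hwv, by omega⟩
          rw [Nat.even_iff]; omega
        · exact hBsub (by rw [Finset.mem_sdiff]; exact ⟨hw2, hwv⟩)
      have h1 := Finset.le_card_sdiff {v} (insert we ((Finset.range q).biUnion T))
      have h2 := Finset.card_le_card hsub'
      rw [Finset.card_singleton] at h1
      omega
  -- arithmetic conversions
  have hceil : ⌈((k : ℚ) - 1) / 4⌉ = ((q : ℕ) : ℤ) := by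
    have h0 : ((k : ℚ) - 1) / 4 = -((1 - (k : ℚ)) / 4) := by ring
    have h1 : (1 - (k : ℚ)) / 4 = ((1 - (k : ℤ) : ℤ) : ℚ) / ((4 : ℕ) : ℚ) := by
      push_cast; ring
    rw [h0, Int.ceil_neg, h1, Rat.floor_intCast_div_natCast, hq]
    omega
  have hfl4 : ⌊(k : ℚ) / 4⌋ = (k : ℤ) / 4 := by
    have h1 : (k : ℚ) / 4 = (((k : ℤ)) : ℚ) / ((4 : ℕ) : ℚ) := by push_cast; ring
    rw [h1, Rat.floor_intCast_div_natCast]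
    norm_num
  have hfl2 : ⌊(k : ℚ) / 2⌋ = (k : ℤ) / 2 := by
    have h1 : (k : ℚ) / 2 = (((k : ℤ)) : ℚ) / ((2 : ℕ) : ℚ) := by push_cast; ring
    rw [h1, Rat.floor_intCast_div_natCast]
    norm_num
  have hmeq : (max 2 (δ2 : ℤ)) = ((m : ℕ) : ℤ) := by
    rw [hm]; push_cast; rfl
  rw [hceil, hfl4, hfl2, hmeq, ← Nat.cast_mul]
  by_cases hC : 4 ≤ k ∧ k % 4 ≤ 1
  · have hkey := key 1 (fun _ => hC) le_rfl
    generalize hP : q * m = P at hkey ⊢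
    omega
  · rcases Nat.lt_or_ge k 2 with hk2 | hk2
    · have hk1 : k = 1 := by omega
      subst hk1
      have hq0 : q = 0 := by omega
      rw [hq0, Nat.zero_mul]
      simp
    · have hkey := key 0 (by omega) (by omega)
      have hkm : 2 ≤ k % 4 := by omega
      generalize hP : q * m = P at hkey ⊢
      omega
end

section
/- Let G be a connected bipartite graph with bipartition V_1, V_2 of minimum degrees δ_1, δ_2 respectively, let k ≥ 1, and let v ∈ V_1 with N_k[v] ≠ V(G). Then the number of vertices of V_2 at distance at most k from v is at least δ_1 + (⌈k/4⌉ - 1)·max{2, δ_1} + ⌊(k-1)/2⌋ - 2·⌊(k-1)/4⌋. -/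
open SimpleGraph Finset

private lemma walk_parity {V : Type*} {G : SimpleGraph V} (V1 V2 : Finset V)
    (hpart : ∀ w, (w ∈ V1 ∨ w ∈ V2) ∧ ¬(w ∈ V1 ∧ w ∈ V2))
    (hbip : ∀ a b, G.Adj a b → (a ∈ V1 ↔ b ∈ V2)) :
    ∀ {a b : V} (p : G.Walk a b), ((a ∈ V1 ↔ b ∈ V1) ↔ Even p.length) := by
  intro a b p
  induction p with
  | nil => simp
  | @cons u x c h q ih =>
    rw [Walk.length_cons, Nat.even_add_one, ← ih]
    have h1 := hbip u x h
    have h2 := hpart x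
    tauto

private lemma walk_split {V : Type*} {G : SimpleGraph V} :
    ∀ {a b : V} (p : G.Walk a b) (d : ℕ), d ≤ p.length →
      ∃ (w : V) (q1 : G.Walk a w) (q2 : G.Walk w b),
        q1.length = d ∧ q2.length = p.length - d := by
  intro a b p
  induction p with
  | nil =>
    intro d hd
    simp only [Walk.length_nil, Nat.le_zero] at hd
    subst hd
    exact ⟨_, Walk.nil, Walk.nil, by simp, by simp⟩
  | @cons u x c h q ih =>
    intro d hd
    match d with
    | 0 => exact ⟨u, Walk.nil, Walk.cons h q, by simp, by simp⟩
    | d + 1 =>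
      obtain ⟨w, q1, q2, h1, h2⟩ := ih d (by simp only [Walk.length_cons] at hd; omega)
      exact ⟨w, Walk.cons h q1, q2, by simp [h1], by simp only [Walk.length_cons]; omega⟩

theorem stmt_9 {V : Type*} [Fintype V] [DecidableEq V]
    (G : SimpleGraph V) [DecidableRel G.Adj]
    (V1 V2 : Finset V)
    (hpart : ∀ w, (w ∈ V1 ∨ w ∈ V2) ∧ ¬(w ∈ V1 ∧ w ∈ V2))
    (hbip : ∀ a b, G.Adj a b → (a ∈ V1 ↔ b ∈ V2))
    (hconn : G.Connected) (k : ℕ) (hk : 1 ≤ k)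
    (δ1 δ2 : ℕ)
    (hδ1min : (∀ w ∈ V1, δ1 ≤ G.degree w) ∧ ∃ w ∈ V1, G.degree w = δ1)
    (hδ2min : (∀ w ∈ V2, δ2 ≤ G.degree w) ∧ ∃ w ∈ V2, G.degree w = δ2)
    (v : V) (hv : v ∈ V1) (hnk : ∃ u, k < G.dist v u) :
    (δ1 : ℤ) + (⌈(k : ℚ) / 4⌉ - 1) * (max 2 (δ1 : ℤ)) + ⌊((k : ℚ) - 1) / 2⌋
        - 2 * ⌊((k : ℚ) - 1) / 4⌋ ≤
      ((univ.filter (fun w => w ∈ V2 ∧ w ≠ v ∧ G.dist v w ≤ k)).card : ℤ) := by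
  classical
  obtain ⟨u, hu⟩ := hnk
  -- every distance ≤ k is realized
  have hreal : ∀ d ≤ k, ∃ w, G.dist v w = d := by
    intro d hd
    obtain ⟨p, hp⟩ := (hconn v u).exists_walk_length_eq_dist
    obtain ⟨w, q1, q2, h1, h2⟩ := walk_split p d (by omega)
    have hle : G.dist v w ≤ d := by rw [← h1]; exact dist_le q1
    have hge : G.dist w u ≤ p.length - d := by rw [← h2]; exact dist_le q2
    have htri : G.dist v u ≤ G.dist v w + G.dist w u := hconn.dist_triangle
    exact ⟨w, by omega⟩
  have hparity : ∀ w, (w ∈ V1 ↔ G.dist v w % 2 = 0) := by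
    intro w
    obtain ⟨p, hp⟩ := (hconn v w).exists_walk_length_eq_dist
    have hwp := walk_parity V1 V2 hpart hbip p
    rw [hp, Nat.even_iff] at hwp
    tauto
  have hV2 : ∀ w, G.dist v w % 2 = 1 → w ∈ V2 := by
    intro w hw
    have h1 := hparity w
    have h2 := hpart w
    have h3 : ¬ (G.dist v w % 2 = 0) := by omega
    tauto
  have hadjdist : ∀ x y, G.Adj x y → G.dist v y ≤ G.dist v x + 1 := by
    intro x y hxy
    obtain ⟨p, hp⟩ := (hconn v x).exists_walk_length_eq_dist
    have := dist_le (p.concat hxy)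
    rwa [Walk.length_concat, hp] at this
  set M := max 2 δ1 with hM
  set P : ℕ → Finset V :=
    fun n => univ.filter (fun w => 0 < G.dist v w ∧ G.dist v w ≤ n ∧ G.dist v w % 2 = 1) with hP
  have hPmono : ∀ m n, m ≤ n → P m ⊆ P n := by
    intro m n hmn w hw
    simp only [hP, mem_filter, mem_univ, true_and] at hw ⊢
    omega
  have hbase : δ1 ≤ (P 1).card := by
    have hsub : G.neighborFinset v ⊆ P 1 := by
      intro y hy
      rw [mem_neighborFinset] at hy
      have h1 := hadjdist v y hy
      have h0 : G.dist v v = 0 := dist_self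
      have hne : G.dist v y ≠ 0 := by
        intro h
        exact hy.ne (hconn.dist_eq_zero_iff.mp h)
      simp only [hP, mem_filter, mem_univ, true_and]
      omega
    calc δ1 ≤ G.degree v := hδ1min.1 v hv
      _ = (G.neighborFinset v).card := (G.card_neighborFinset_eq_degree v).symm
      _ ≤ (P 1).card := card_le_card hsub
  have hstep : ∀ i, 1 ≤ i → 4*i+1 ≤ k → (P (4*i-2)).card + M ≤ (P (4*i+1)).card := by
    intro i hi hik
    obtain ⟨x, hx⟩ := hreal (4*i) (by omega)
    have hx1 : x ∈ V1 := (hparity x).mpr (by omega)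
    obtain ⟨w1, hw1⟩ := hreal (4*i-1) (by omega)
    obtain ⟨w2, hw2⟩ := hreal (4*i+1) (by omega)
    have hdist : ∀ y, G.Adj x y → (G.dist v y = 4*i-1 ∨ G.dist v y = 4*i+1) := by
      intro y hxy
      have h1 := hadjdist x y hxy
      have h2 := hadjdist y x hxy.symm
      have h3 : G.dist v y % 2 = 1 := by
        have hy2 : y ∈ V2 := (hbip x y hxy).mp hx1
        have h4 := hparity y
        have h5 := hpart y
        by_contra hcon
        have h6 : G.dist v y % 2 = 0 := by omega
        exact h5.2 ⟨h4.mpr h6, hy2⟩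
      omega
    have hsub1 : G.neighborFinset x ⊆ P (4*i+1) \ P (4*i-2) := by
      intro y hy
      rw [mem_neighborFinset] at hy
      have := hdist y hy
      simp only [hP, mem_sdiff, mem_filter, mem_univ, true_and]
      omega
    have hδ : δ1 ≤ (P (4*i+1) \ P (4*i-2)).card :=
      le_trans (le_trans (hδ1min.1 x hx1) (G.card_neighborFinset_eq_degree x).symm.le)
        (card_le_card hsub1)
    have h2le : 2 ≤ (P (4*i+1) \ P (4*i-2)).card := by
      have hw1m : w1 ∈ P (4*i+1) \ P (4*i-2) := by
        simp only [hP, mem_sdiff, mem_filter, mem_univ, true_and]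
        omega
      have hw2m : w2 ∈ P (4*i+1) \ P (4*i-2) := by
        simp only [hP, mem_sdiff, mem_filter, mem_univ, true_and]
        omega
      have hne : w1 ≠ w2 := by
        intro h
        rw [h, hw2] at hw1
        omega
      have : ({w1, w2} : Finset V) ⊆ P (4*i+1) \ P (4*i-2) := by
        intro z hz
        simp only [mem_insert, mem_singleton] at hz
        rcases hz with h | h <;> subst h <;> assumption
      calc 2 = ({w1, w2} : Finset V).card := by
            rw [card_insert_of_notMem (by simp [hne]), card_singleton]
        _ ≤ _ := card_le_card this
    have hMle : M ≤ (P (4*i+1) \ P (4*i-2)).card := max_le h2le hδ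
    have hcard := card_sdiff_add_card_eq_card (hPmono (4*i-2) (4*i+1) (by omega))
    omega
  have hmain : ∀ i, 4*i+1 ≤ k → δ1 + i * M ≤ (P (4*i+1)).card := by
    intro i
    induction i with
    | zero => intro _; simpa using hbase
    | succ i ih =>
      intro hik
      have h1 := ih (by omega)
      have h2 := hstep (i+1) (by omega) (by omega)
      have h3 := card_le_card (hPmono (4*i+1) (4*(i+1)-2) (by omega))
      have h4 : (i+1) * M = i * M + M := by ring
      omega
  set c := (k+3)/4 with hc
  have hc1 : 1 ≤ c := by omega
  have h41 : 4*(c-1)+1 ≤ k := by omega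
  have hA := hmain (c-1) h41
  set N := (c-1) * M with hN
  have hkey : δ1 + N + ((k-1)/2 - 2*((k-1)/4)) ≤
      (univ.filter (fun w => w ∈ V2 ∧ w ≠ v ∧ G.dist v w ≤ k)).card := by
    have hTsub : P k ⊆ univ.filter (fun w => w ∈ V2 ∧ w ≠ v ∧ G.dist v w ≤ k) := by
      intro w hw
      simp only [hP, mem_filter, mem_univ, true_and] at hw ⊢
      refine ⟨hV2 w (by omega), ?_, hw.2.1⟩
      intro h
      rw [h] at hw
      simp only [dist_self] at hw
      omega
    have hPk := card_le_card hTsub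
    by_cases hcase : k % 4 = 0 ∨ k % 4 = 3
    · have hr1 : (k-1)/2 - 2*((k-1)/4) = 1 := by omega
      have h4c : 4*c-1 ≤ k := by omega
      obtain ⟨w3, hw3⟩ := hreal (4*c-1) h4c
      have hw3m : w3 ∈ P (4*c-1) \ P (4*(c-1)+1) := by
        simp only [hP, mem_sdiff, mem_filter, mem_univ, true_and]
        omega
      have hcard := card_sdiff_add_card_eq_card (hPmono (4*(c-1)+1) (4*c-1) (by omega))
      have hone : 1 ≤ (P (4*c-1) \ P (4*(c-1)+1)).card := card_pos.mpr ⟨w3, hw3m⟩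
      have hmono2 := card_le_card (hPmono (4*c-1) k h4c)
      omega
    · have hr0 : (k-1)/2 - 2*((k-1)/4) = 0 := by omega
      have hmono2 := card_le_card (hPmono (4*(c-1)+1) k (by omega))
      omega
  -- cast arithmetic
  have e1 : ((k-1 : ℕ) : ℚ) = (k : ℚ) - 1 := by
    have := Nat.cast_sub (R := ℚ) hk
    simpa using this
  have h2cast : (2 : ℚ) = ((2 : ℕ) : ℚ) := by norm_num
  have h4cast : (4 : ℚ) = ((4 : ℕ) : ℚ) := by norm_num
  have hfl2 : ⌊((k : ℚ) - 1) / 2⌋ = (((k-1)/2 : ℕ) : ℤ) := by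
    rw [← e1, h2cast, Rat.floor_natCast_div_natCast]
    omega
  have hfl4 : ⌊((k : ℚ) - 1) / 4⌋ = (((k-1)/4 : ℕ) : ℤ) := by
    rw [← e1, h4cast, Rat.floor_natCast_div_natCast]
    omega
  have hceil : ⌈(k : ℚ) / 4⌉ = (c : ℤ) := by
    have hnf : ⌈(k : ℚ) / 4⌉ = -⌊-((k : ℚ) / 4)⌋ := by
      rw [Int.floor_neg]; ring
    rw [hnf, show (-((k : ℚ) / 4)) = ((-(k : ℤ) : ℤ) : ℚ) / ((4 : ℕ) : ℚ) by push_cast; ring,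
      Rat.floor_intCast_div_natCast]
    omega
  rw [hceil, hfl2, hfl4]
  have hprod : ((c : ℤ) - 1) * max 2 (δ1 : ℤ) = (N : ℤ) := by
    rw [hN, hM]
    push_cast [Nat.cast_sub hc1]
    ring
  rw [hprod]
  omega
end

section
/- For any connected graph G on n vertices and any real numbers p_1, …, p_n ∈ (0,1), the k-distance domination number satisfies γ_k(G) ≤ Σ_{i=1}^{n} ( p_i + (1 - p_i) · Π_{j ∈ N_k(i)} (1 - p_j) ). -/
/-! Choose each vertex `i` independently with probability `p i` and add every vertex that is
still not `k`-dominated. The result is a `k`-distance dominating set, and its expected size is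
at most `∑ i, (p i + (1 - p i) * ∏ j ∈ N_k(i), (1 - p j))`: vertex `i` is left undominated
exactly when none of the vertices of its closed `k`-ball was chosen. Some outcome is no larger
than the expectation. -/

open SimpleGraph Finset

namespace Finset

open scoped Classical

variable {V : Type*} [Fintype V]

/-- The probability of the outcome `S` when every `i` is chosen independently with
probability `p i`. -/
noncomputable def bernoulliWeight (p : V → ℝ) (S : Finset V) : ℝ :=
  (∏ i ∈ S, p i) * ∏ i ∈ univ \ S, (1 - p i)

lemma bernoulliWeight_nonneg {p : V → ℝ} (hp : ∀ i, p i ∈ Set.Icc (0 : ℝ) 1) (S : Finset V) :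
    0 ≤ bernoulliWeight p S :=
  mul_nonneg (prod_nonneg fun i _ => (hp i).1) (prod_nonneg fun i _ => sub_nonneg.2 (hp i).2)

lemma sum_bernoulliWeight_disjoint (p : V → ℝ) (A : Finset V) :
    ∑ S ∈ univ.powerset, (if Disjoint S A then bernoulliWeight p S else 0) =
      ∏ j ∈ A, (1 - p j) := by
  have hprod := prod_add (fun j => if j ∈ A then 0 else p j) (fun j => 1 - p j) univ
  have hleft : ∏ j, ((if j ∈ A then 0 else p j) + (1 - p j)) = ∏ j ∈ A, (1 - p j) := by
    calc _ = ∏ j, if j ∈ A then 1 - p j else 1 :=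
          prod_congr rfl fun j _ => by split_ifs <;> ring
      _ = ∏ j ∈ A, (1 - p j) := by rw [prod_ite_mem, univ_inter]
  rw [← hleft, hprod]
  refine sum_congr rfl fun S _ => ?_
  split_ifs with hSA
  · refine congrArg (· * _) (prod_congr rfl fun j hj => ?_)
    rw [if_neg (disjoint_left.1 hSA hj)]
  · obtain ⟨j, hjS, hjA⟩ := not_disjoint_iff.1 hSA
    rw [prod_eq_zero hjS (by simp [hjA]), zero_mul]

lemma sum_bernoulliWeight (p : V → ℝ) : ∑ S ∈ univ.powerset, bernoulliWeight p S = 1 := by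
  simpa using sum_bernoulliWeight_disjoint p ∅

lemma sum_bernoulliWeight_mem (p : V → ℝ) (i : V) :
    ∑ S ∈ univ.powerset, (if i ∈ S then bernoulliWeight p S else 0) = p i := by
  have hsplit : ∀ S : Finset V, (if i ∈ S then bernoulliWeight p S else 0) =
      bernoulliWeight p S - if Disjoint S {i} then bernoulliWeight p S else 0 := fun S => by
    by_cases hi : i ∈ S <;> simp [hi]
  simp only [hsplit, sum_sub_distrib, sum_bernoulliWeight, sum_bernoulliWeight_disjoint,
    prod_singleton, sub_sub_cancel]

/-- Linearity of expectation for the size of a random set. -/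
lemma sum_bernoulliWeight_mul_card (p : V → ℝ) (F : Finset V → Finset V) :
    ∑ S ∈ univ.powerset, bernoulliWeight p S * #(F S) =
      ∑ i, ∑ S ∈ univ.powerset, (if i ∈ F S then bernoulliWeight p S else 0) := by
  rw [sum_comm]
  refine sum_congr rfl fun S _ => ?_
  have hcard : (#(F S) : ℝ) = ∑ i, if i ∈ F S then 1 else 0 := by simp
  simp only [hcard, mul_sum, mul_ite, mul_one, mul_zero]

lemma exists_le_sum_bernoulliWeight_mul {p : V → ℝ} (hp : ∀ i, p i ∈ Set.Icc (0 : ℝ) 1)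
    (f : Finset V → ℝ) :
    ∃ S, f S ≤ ∑ T ∈ univ.powerset, bernoulliWeight p T * f T := by
  set E := ∑ T ∈ univ.powerset, bernoulliWeight p T * f T
  by_contra! hlt
  obtain ⟨S, hS, hS0⟩ := exists_ne_zero_of_sum_ne_zero
    ((sum_bernoulliWeight p).trans_ne one_ne_zero)
  have hSpos := (bernoulliWeight_nonneg hp S).lt_of_ne' hS0
  have hE : ∑ T ∈ univ.powerset, bernoulliWeight p T * E < E := by
    calc _ < ∑ T ∈ univ.powerset, bernoulliWeight p T * f T :=
          sum_lt_sum (fun T _ => mul_le_mul_of_nonneg_left (hlt T).le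
            (bernoulliWeight_nonneg hp T)) ⟨S, hS, mul_lt_mul_of_pos_left (hlt S) hSpos⟩
      _ = E := rfl
  rw [← sum_mul, sum_bernoulliWeight, one_mul] at hE
  exact hE.false

end Finset

namespace SimpleGraph

open scoped Classical

variable {V : Type*} [Fintype V] (G : SimpleGraph V) (k : ℕ)

noncomputable def closedDistBall (i : V) : Finset V := univ.filter fun j => G.dist i j ≤ k

noncomputable def distUndominated (S : Finset V) : Finset V :=
  univ.filter fun v => ∀ u ∈ S, ¬G.dist u v ≤ k

variable {G k}

lemma closedDistBall_eq_insert (i : V) :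
    G.closedDistBall k i = insert i (univ.filter fun j => j ≠ i ∧ G.dist i j ≤ k) := by
  ext j
  by_cases hj : j = i <;> simp [closedDistBall, hj]

lemma mem_distUndominated_iff_disjoint {S : Finset V} {v : V} :
    v ∈ G.distUndominated k S ↔ Disjoint S (G.closedDistBall k v) := by
  simp only [distUndominated, closedDistBall, Finset.disjoint_left, mem_filter, mem_univ, true_and]
  simp [dist_comm]

lemma exists_dist_le_of_notMem_union_distUndominated {S : Finset V} {v : V}
    (hv : v ∉ S ∪ G.distUndominated k S) : ∃ u ∈ S ∪ G.distUndominated k S, G.dist u v ≤ k := by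
  simp only [distUndominated, mem_union, mem_filter, mem_univ, true_and, not_or,
    not_forall, not_not] at hv
  obtain ⟨-, u, hu, huv⟩ := hv
  exact ⟨u, mem_union_left _ hu, huv⟩

lemma sum_bernoulliWeight_mul_card_add_card_distUndominated (p : V → ℝ) :
    ∑ S ∈ univ.powerset, bernoulliWeight p S * (#S + #(G.distUndominated k S)) =
      ∑ i, (p i + (1 - p i) *
        ∏ j ∈ univ.filter (fun j => j ≠ i ∧ G.dist i j ≤ k), (1 - p j)) := by
  have hchosen : ∑ S ∈ univ.powerset, bernoulliWeight p S * #S = ∑ i, p i :=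
    (sum_bernoulliWeight_mul_card p id).trans
      (sum_congr rfl fun i _ => sum_bernoulliWeight_mem p i)
  have hundominated : ∑ S ∈ univ.powerset, bernoulliWeight p S * #(G.distUndominated k S) =
      ∑ i, ∏ j ∈ G.closedDistBall k i, (1 - p j) := by
    simp only [sum_bernoulliWeight_mul_card, mem_distUndominated_iff_disjoint,
      sum_bernoulliWeight_disjoint]
  simp_rw [mul_add]
  rw [sum_add_distrib, hchosen, hundominated, ← sum_add_distrib]
  refine sum_congr rfl fun i _ => ?_
  rw [closedDistBall_eq_insert, prod_insert]
  simp

end SimpleGraph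

open scoped Classical in
theorem stmt_12_general {V : Type*} [Fintype V]
    (G : SimpleGraph V) (k : ℕ)
    (p : V → ℝ) (hp : ∀ i, p i ∈ Set.Ioo (0 : ℝ) 1) :
    ((sInf {n : ℕ | ∃ D : Finset V, D.card = n ∧
        ∀ v, v ∉ D → ∃ u ∈ D, G.dist u v ≤ k} : ℕ) : ℝ) ≤
      ∑ i, (p i + (1 - p i) *
        ∏ j ∈ univ.filter (fun j => j ≠ i ∧ G.dist i j ≤ k), (1 - p j)) := by
  obtain ⟨S, hS⟩ := exists_le_sum_bernoulliWeight_mul (fun i => Set.Ioo_subset_Icc_self (hp i))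
    fun S => (#S + #(G.distUndominated k S) : ℝ)
  rw [sum_bernoulliWeight_mul_card_add_card_distUndominated] at hS
  calc _ ≤ ((#(S ∪ G.distUndominated k S) : ℕ) : ℝ) := by
        exact Nat.cast_le.2 <| Nat.sInf_le
          ⟨_, rfl, fun v hv => exists_dist_le_of_notMem_union_distUndominated hv⟩
    _ ≤ #S + #(G.distUndominated k S) := by exact_mod_cast card_union_le _ _
    _ ≤ _ := hS

open scoped Classical in
theorem stmt_12 {V : Type*} [Fintype V]
    (G : SimpleGraph V) (hconn : G.Connected) (k : ℕ)
    (p : V → ℝ) (hp : ∀ i, p i ∈ Set.Ioo (0 : ℝ) 1) :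
    ((sInf {n : ℕ | ∃ D : Finset V, D.card = n ∧
        ∀ v, v ∉ D → ∃ u ∈ D, G.dist u v ≤ k} : ℕ) : ℝ) ≤
      ∑ i, (p i + (1 - p i) *
        ∏ j ∈ univ.filter (fun j => j ≠ i ∧ G.dist i j ≤ k), (1 - p j)) :=
  stmt_12_general G k p hp
end
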